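/- Let J_n be as in the setting above and let ev: J_n → Laurent polynomials in n-2 variables be the evaluation map ev(f) = f|_{x_{n-1}=t, x_n=-t} (a constant in t). Then the kernel of ev on J_n equals the set of S_n-invariant Laurent polynomials divisible by ∏_{1≤i<j≤n}(x_i + x_j) with S_n-invariant quotient. -/

import Mathlib

/-- Laurent polynomials in `n` variables over `ℚ`. -/
abbrev LP (n : ℕ) : Type := AddMonoidAlgebra ℚ (Fin n →₀ ℤ)

/-- Evaluation of a Laurent polynomial at a point with invertible coordinates. -/
noncomputable def lpEval {n : ℕ} (x : Fin n → ℚˣ) (f : LP n) : ℚ :=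
  Finsupp.sum f.coeff fun d c => c * ∏ i, ((x i ^ (d i) : ℚˣ) : ℚ)

/-- `f` is symmetric (invariant under the `Sₙ`-action permuting the variables). -/
def IsSymmLP {n : ℕ} (f : LP n) : Prop :=
  ∀ (σ : Equiv.Perm (Fin n)) (x : Fin n → ℚˣ), lpEval (x ∘ σ) f = lpEval x f

/-- The point obtained by substituting `x i = t`, `x j = -t`, others given by `y`. -/
def substPair {n : ℕ} (i j : Fin n) (t : ℚˣ) (y : Fin n → ℚˣ) : Fin n → ℚˣ :=
  fun k => if k = i then t else if k = j then -t else y k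

/-- The variable `xᵢ` as a Laurent polynomial. -/
noncomputable def Xv {n : ℕ} (i : Fin n) : LP n :=
  AddMonoidAlgebra.single (Finsupp.single i (1 : ℤ)) (1 : ℚ)

open AddMonoidAlgebra Multiplicative


variable {n : ℕ}

-- domain check
example : NoZeroDivisors (LP n) := inferInstance

noncomputable def monUnit (d : Fin n →₀ ℤ) : (LP n)ˣ where
  val := AddMonoidAlgebra.single d 1
  inv := AddMonoidAlgebra.single (-d) 1
  val_inv := by rw [AddMonoidAlgebra.single_mul_single]; simp [AddMonoidAlgebra.one_def]
  inv_val := by rw [AddMonoidAlgebra.single_mul_single]; simp [AddMonoidAlgebra.one_def]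

noncomputable def monUnitHom : Multiplicative (Fin n →₀ ℤ) →* (LP n)ˣ where
  toFun d := monUnit d.toAdd
  map_one' := by ext; simp [monUnit, AddMonoidAlgebra.one_def]
  map_mul' d e := by ext; simp [monUnit, AddMonoidAlgebra.single_mul_single]

variable {S : Type} [CommRing S] [Algebra ℚ S] {T : Type} [CommRing T] [Algebra ℚ T]

noncomputable def chiHom (u : Fin n → Sˣ) : Multiplicative (Fin n →₀ ℤ) →* S where
  toFun d := ∏ k, ((u k ^ (toAdd d) k : Sˣ) : S)
  map_one' := by simp
  map_mul' d e := by
    simp [toAdd_mul, Finsupp.add_apply, zpow_add, Units.val_mul, Finset.prod_mul_distrib]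

noncomputable def evA (u : Fin n → Sˣ) : LP n →ₐ[ℚ] S :=
  AddMonoidAlgebra.lift ℚ S (Fin n →₀ ℤ) (chiHom u)

lemma evA_single (u : Fin n → Sˣ) (d : Fin n →₀ ℤ) (c : ℚ) :
    evA u (AddMonoidAlgebra.single d c) = c • ∏ k, ((u k ^ d k : Sˣ) : S) := by
  simp [evA, chiHom]

lemma lpEval_eq (x : Fin n → ℚˣ) (f : LP n) : lpEval x f = evA x f := by
  rw [lpEval, evA, AddMonoidAlgebra.lift_apply]
  exact Finsupp.sum_congr fun d _ => by simp [chiHom]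

lemma evA_X (u : Fin n → Sˣ) (k : Fin n) : evA u (Xv k) = u k := by
  rw [Xv, evA_single, one_smul, Finset.prod_eq_single k]
  · simp
  · intro l _ hl
    rw [Finsupp.single_eq_of_ne' (Ne.symm hl), zpow_zero, Units.val_one]
  · intro h; exact absurd (Finset.mem_univ k) h

lemma evA_comp (φ : S →ₐ[ℚ] T) (u : Fin n → Sˣ) :
    φ.comp (evA u) = evA (fun k => Units.map (φ : S →* T) (u k)) := by
  refine AddMonoidAlgebra.algHom_ext ?_ (Subsingleton.elim _ _)
  intro d
  simp only [AlgHom.coe_comp, Function.comp_apply, evA_single, one_smul]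
  rw [map_prod]
  refine Finset.prod_congr rfl fun k _ => ?_
  rw [← map_zpow, Units.coe_map]
  rfl

lemma evA_comp_apply (φ : S →ₐ[ℚ] T) (u : Fin n → Sˣ) (f : LP n) :
    φ (evA u f) = evA (fun k => Units.map (φ : S →* T) (u k)) f :=
  DFunLike.congr_fun (evA_comp φ u) f

lemma sum_single_eq (d : Fin n →₀ ℤ) : ∑ k, Finsupp.single k (d k) = d := by
  ext a
  rw [Finset.sum_apply']
  simp [Finsupp.single_apply]

lemma evA_monUnit : evA (fun k => monUnit (Finsupp.single k 1)) = AlgHom.id ℚ (LP n) := by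
  refine AddMonoidAlgebra.algHom_ext ?_ (Subsingleton.elim _ _)
  intro d
  simp only [AlgHom.id_apply, evA_single, one_smul]
  have h1 : ∀ k : Fin n, ((monUnit (Finsupp.single k 1) ^ (d k) : (LP n)ˣ) : LP n)
      = ((monUnitHom (ofAdd (Finsupp.single k (d k))) : (LP n)ˣ) : LP n) := by
    intro k
    rw [show Finsupp.single k (d k) = d k • Finsupp.single k (1:ℤ) by
      rw [Finsupp.smul_single]; norm_num, ofAdd_zsmul, map_zpow]
    rfl
  rw [Finset.prod_congr rfl fun k _ => h1 k,
    show (∏ k, ((monUnitHom (ofAdd (Finsupp.single k (d k))) : (LP n)ˣ) : LP n))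
      = ((∏ k, monUnitHom (ofAdd (Finsupp.single k (d k))) : (LP n)ˣ) : LP n) by
      simpa using
        (map_prod (Units.coeHom (LP n)) (fun k => monUnitHom (ofAdd (Finsupp.single k (d k))))
          Finset.univ).symm,
    ← map_prod, ← ofAdd_sum, sum_single_eq]
  rfl

noncomputable def permA (σ : Equiv.Perm (Fin n)) : LP n →ₐ[ℚ] LP n :=
  evA (fun k => monUnit (Finsupp.single (σ k) 1))

lemma permA_X (σ : Equiv.Perm (Fin n)) (k : Fin n) : permA σ (Xv k) = Xv (σ k) :=
  evA_X _ k

lemma evA_permA (x : Fin n → ℚˣ) (σ : Equiv.Perm (Fin n)) (f : LP n) :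
    evA x (permA σ f) = evA (x ∘ σ) f := by
  rw [permA, evA_comp_apply,
    show (fun k => Units.map ((evA x : LP n →ₐ[ℚ] ℚ) : LP n →* ℚ) (monUnit (Finsupp.single (σ k) 1)))
      = x ∘ σ from funext fun k => Units.ext (evA_X x (σ k))]

noncomputable def psiHom (d : Fin n →₀ ℤ) : (Fin n → ℚˣ) →* ℚ where
  toFun x := ∏ k, ((x k ^ d k : ℚˣ) : ℚ)
  map_one' := by simp
  map_mul' x y := by
    simp [Pi.mul_apply, mul_zpow, Units.val_mul, Finset.prod_mul_distrib]

lemma psiHom_key (k : Fin n) (m : Fin n →₀ ℤ) :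
    (psiHom m) (Function.update (1 : Fin n → ℚˣ) k (Units.mk0 2 two_ne_zero)) = (2:ℚ) ^ (m k) := by
  simp only [psiHom, MonoidHom.coe_mk, OneHom.coe_mk]
  rw [Finset.prod_eq_single k]
  · rw [Function.update_self, Units.val_zpow_eq_zpow_val, Units.val_mk0]
  · intro l _ hl
    rw [Function.update_of_ne hl]
    simp
  · intro h; exact absurd (Finset.mem_univ k) h

lemma psiHom_inj : Function.Injective (psiHom (n := n)) := by
  intro d e h
  ext k
  have h2 := DFunLike.congr_fun h (Function.update (1 : Fin n → ℚˣ) k (Units.mk0 2 two_ne_zero))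
  rw [psiHom_key, psiHom_key] at h2
  exact zpow_right_injective₀ (by norm_num) (by norm_num) h2

lemma lpEval_eq_zero {f : LP n} (h : ∀ x, lpEval x f = 0) : f = 0 := by
  classical
  have li := (linearIndependent_monoidHom (Fin n → ℚˣ) ℚ).comp psiHom psiHom_inj
  rw [linearIndependent_iff'] at li
  have hz : ∑ d ∈ f.coeff.support, f.coeff d • (⇑(psiHom d) : (Fin n → ℚˣ) → ℚ) = 0 := by
    funext x
    have hx := h x
    rw [lpEval, Finsupp.sum] at hx
    simpa [psiHom, Finset.sum_apply, smul_eq_mul] using hx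
  ext d
  by_cases hd : d ∈ f.coeff.support
  · exact li f.coeff.support f.coeff hz d hd
  · simpa using Finsupp.notMem_support_iff.mp hd

lemma lpEval_injective {f g : LP n} (h : ∀ x, lpEval x f = lpEval x g) : f = g := by
  have hfg : f - g = 0 := lpEval_eq_zero fun x => by
    rw [lpEval_eq, map_sub, ← lpEval_eq, ← lpEval_eq, h, sub_self]
  exact sub_eq_zero.mp hfg


lemma isSymm_iff {f : LP n} : IsSymmLP f ↔ ∀ σ : Equiv.Perm (Fin n), permA σ f = f := by
  constructor
  · intro h σ
    apply lpEval_injective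
    intro x
    rw [lpEval_eq, evA_permA, ← lpEval_eq]
    exact h σ x
  · intro h σ x
    rw [lpEval_eq (x ∘ σ), ← evA_permA, h σ, ← lpEval_eq]

noncomputable def subsA (i j : Fin n) : LP n →ₐ[ℚ] LP n :=
  evA (fun k => if k = j then -monUnit (Finsupp.single i 1) else monUnit (Finsupp.single k 1))

lemma evA_subsA (i j : Fin n) (hij : i ≠ j) (x : Fin n → ℚˣ) (f : LP n) :
    evA x (subsA i j f) = lpEval (substPair i j (x i) x) f := by
  rw [subsA, evA_comp_apply, lpEval_eq]
  congr 1
  apply congrArg evA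
  funext k
  apply Units.ext
  show (evA x) _ = ((substPair i j (x i) x k : ℚˣ) : ℚ)
  by_cases hk : k = j
  · subst hk
    rw [if_pos rfl]
    show (evA x) (-(Xv i)) = _
    rw [map_neg, evA_X]
    simp [substPair, if_neg (Ne.symm hij)]
  · rw [if_neg hk]
    show (evA x) (Xv k) = _
    rw [evA_X]
    by_cases hki : k = i
    · subst hki; simp [substPair]
    · simp [substPair, hki, hk]

lemma mk_subsA (i j : Fin n) (hij : i ≠ j) (g : LP n) :
    Ideal.Quotient.mk (Ideal.span {Xv i + Xv j}) (subsA i j g)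
      = Ideal.Quotient.mk (Ideal.span {Xv i + Xv j}) g := by
  set I := Ideal.span {Xv i + Xv j}
  have h2 : (Ideal.Quotient.mkₐ ℚ I).comp (subsA i j)
      = (Ideal.Quotient.mkₐ ℚ I).comp (evA (fun k => monUnit (Finsupp.single k 1))) := by
    rw [subsA, evA_comp, evA_comp]
    congr 1
    funext k
    apply Units.ext
    by_cases hk : k = j
    · rw [if_pos hk]
      show Ideal.Quotient.mk I (-(Xv i)) = Ideal.Quotient.mk I (Xv k)
      rw [hk, Ideal.Quotient.eq, show (-(Xv i)) - Xv j = -(Xv i + Xv j) by ring]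
      exact neg_mem (Ideal.subset_span rfl)
    · rw [if_neg hk]
  have h3 := DFunLike.congr_fun h2 g
  simp only [AlgHom.coe_comp, Function.comp_apply, Ideal.Quotient.mkₐ_eq_mk] at h3
  rw [h3]
  congr 1
  exact DFunLike.congr_fun evA_monUnit g

lemma subs_ker {i j : Fin n} (hij : i ≠ j) {f : LP n} (hf : subsA i j f = 0) :
    (Xv i + Xv j) ∣ f := by
  have h0 : Ideal.Quotient.mk (Ideal.span {Xv i + Xv j}) f = 0 := by
    rw [← mk_subsA i j hij, hf, map_zero]
  rw [Ideal.Quotient.eq_zero_iff_mem, Ideal.mem_span_singleton] at h0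
  exact h0

lemma subsA_pair (i j : Fin n) (hij : i ≠ j) : subsA i j (Xv i + Xv j) = 0 := by
  have hXi : subsA i j (Xv i) = Xv i := by
    rw [show subsA i j (Xv i) = _ from evA_X _ i, if_neg hij]
    rfl
  have hXj : subsA i j (Xv j) = -(Xv i) := by
    rw [show subsA i j (Xv j) = _ from evA_X _ j, if_pos rfl]
    rfl
  rw [map_add, hXi, hXj, add_neg_cancel]

lemma prime_pair {i j : Fin n} (hij : i ≠ j) : Prime (Xv i + Xv j) := by
  refine ⟨?_, ?_, ?_⟩
  · intro h0
    have h1 : (evA (fun _ => (1:ℚˣ))) (Xv i + Xv j) = 2 := by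
      rw [map_add, evA_X, evA_X]; norm_num
    rw [h0, map_zero] at h1
    norm_num at h1
  · intro hu
    set x : Fin n → ℚˣ := fun k => if k = i then -1 else 1 with hxdef
    have h0 : evA x (Xv i + Xv j) = 0 := by
      rw [map_add, evA_X, evA_X]
      simp [hxdef, if_neg (Ne.symm hij)]
    have h1 := hu.map (evA x : LP n →ₐ[ℚ] ℚ)
    rw [h0] at h1
    simpa using h1
  · intro a b hab
    obtain ⟨c, hc⟩ := hab
    have h0 : subsA i j a * subsA i j b = 0 := by
      rw [← map_mul, hc, map_mul, subsA_pair i j hij, zero_mul]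
    rcases mul_eq_zero.mp h0 with h | h
    · exact Or.inl (subs_ker hij h)
    · exact Or.inr (subs_ker hij h)

lemma prod_pairs_reindex {M : Type*} [CommMonoid M] (σ : Equiv.Perm (Fin n))
    (g : Fin n → Fin n → M) (hg : ∀ a b, g a b = g b a) :
    ∏ p ∈ Finset.univ.filter (fun p : Fin n × Fin n => p.1 < p.2), g (σ p.1) (σ p.2)
      = ∏ p ∈ Finset.univ.filter (fun p : Fin n × Fin n => p.1 < p.2), g p.1 p.2 := by
  refine Finset.prod_nbij'
    (fun p => if σ p.1 < σ p.2 then (σ p.1, σ p.2) else (σ p.2, σ p.1))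
    (fun q => if σ⁻¹ q.1 < σ⁻¹ q.2 then (σ⁻¹ q.1, σ⁻¹ q.2) else (σ⁻¹ q.2, σ⁻¹ q.1))
    ?_ ?_ ?_ ?_ ?_
  · intro p hp
    simp only [Finset.mem_filter, Finset.mem_univ, true_and] at hp ⊢
    split_ifs with h
    · exact h
    · have hne : σ p.2 ≠ σ p.1 := fun he => absurd (σ.injective he) (ne_of_gt hp)
      exact lt_of_le_of_ne (not_lt.mp h) hne
  · intro q hq
    simp only [Finset.mem_filter, Finset.mem_univ, true_and] at hq ⊢
    split_ifs with h
    · exact h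
    · have hne : σ⁻¹ q.2 ≠ σ⁻¹ q.1 := fun he => absurd (σ⁻¹.injective he) (ne_of_gt hq)
      exact lt_of_le_of_ne (not_lt.mp h) hne
  · intro p hp
    simp only [Finset.mem_filter, Finset.mem_univ, true_and] at hp
    split_ifs with h1 h2 h2
    · simp
    · simp only [Prod.fst, Prod.snd, Equiv.Perm.coe_inv, Equiv.symm_apply_apply] at h2
      exact absurd hp h2
    · simp only [Prod.fst, Prod.snd, Equiv.Perm.coe_inv, Equiv.symm_apply_apply] at h2
      exact absurd (hp.trans h2) (lt_irrefl _)
    · simp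
  · intro q hq
    simp only [Finset.mem_filter, Finset.mem_univ, true_and] at hq
    split_ifs with h1 h2 h2
    · simp
    · simp only [Prod.fst, Prod.snd, Equiv.Perm.coe_inv, Equiv.apply_symm_apply] at h2
      exact absurd hq h2
    · simp only [Prod.fst, Prod.snd, Equiv.Perm.coe_inv, Equiv.apply_symm_apply] at h2
      exact absurd (hq.trans h2) (lt_irrefl _)
    · simp
  · intro p hp
    split_ifs with h
    · rfl
    · exact hg _ _

lemma prod_primes_dvd' {α : Type*} [CommMonoidWithZero α] {ι : Type*} [DecidableEq ι]
    (s : Finset ι) (v : ι → α) (hp : ∀ i ∈ s, Prime (v i))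
    (hnd : ∀ i ∈ s, ∀ j ∈ s, i ≠ j → ¬ v i ∣ v j) {f : α}
    (hd : ∀ i ∈ s, v i ∣ f) : (∏ i ∈ s, v i) ∣ f := by
  induction s using Finset.induction_on generalizing f with
  | empty => simpa using one_dvd f
  | insert a s' ha ih =>
    obtain ⟨h, hh⟩ := hd a (Finset.mem_insert_self a s')
    have hsub : ∀ i ∈ s', v i ∣ h := by
      intro i hi
      have hine : i ≠ a := fun he => ha (he ▸ hi)
      have hidvd : v i ∣ v a * h := hh ▸ hd i (Finset.mem_insert_of_mem hi)
      rcases (hp i (Finset.mem_insert_of_mem hi)).2.2 _ _ hidvd with hcase | hcase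
      · exact absurd hcase
          (hnd i (Finset.mem_insert_of_mem hi) a (Finset.mem_insert_self a s') hine)
      · exact hcase
    have hind := ih (fun i hi => hp i (Finset.mem_insert_of_mem hi))
      (fun i hi j hj hij => hnd i (Finset.mem_insert_of_mem hi) j (Finset.mem_insert_of_mem hj) hij)
      hsub
    rw [Finset.prod_insert ha, hh]
    exact mul_dvd_mul_left (v a) hind

lemma pair_not_dvd {p q : Fin n × Fin n} (hp : p.1 < p.2) (hq : q.1 < q.2) (hpq : p ≠ q) :
    ¬ (Xv p.1 + Xv p.2) ∣ (Xv q.1 + Xv q.2) := by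
  rintro ⟨c, hc⟩
  have hp21 : p.2 ≠ p.1 := ne_of_gt hp
  set x : Fin n → ℚˣ := fun m =>
    if m = p.1 then Units.mk0 (-2 : ℚ) (by norm_num)
    else if m = p.2 then Units.mk0 2 two_ne_zero else 1 with hxdef
  have h0 : evA x (Xv p.1 + Xv p.2) = 0 := by
    rw [map_add, evA_X, evA_X, hxdef]
    simp [hp21]
  have h1 : evA x (Xv q.1 + Xv q.2) = 0 := by
    rw [hc, map_mul, h0, zero_mul]
  rw [map_add, evA_X, evA_X, hxdef] at h1
  dsimp only at h1
  by_cases e1 : q.1 = p.1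
  · by_cases e2 : q.2 = p.2
    · exact hpq ((Prod.ext e1 e2).symm)
    · by_cases e3 : q.2 = p.1
      · exact absurd hq (by rw [e1, e3]; exact lt_irrefl _)
      · rw [if_pos e1, if_neg e3, if_neg e2] at h1
        norm_num at h1
  · by_cases e3 : q.1 = p.2
    · by_cases e4 : q.2 = p.1
      · have hcon : p.1 < p.1 := lt_trans (lt_of_lt_of_eq hp e3.symm) (lt_of_lt_of_eq hq e4)
        exact absurd hcon (lt_irrefl _)
      · by_cases e5 : q.2 = p.2
        · exact absurd hq (by rw [e3, e5]; exact lt_irrefl _)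
        · rw [if_neg e1, if_pos e3, if_neg e4, if_neg e5] at h1
          norm_num at h1
    · by_cases e4 : q.2 = p.1
      · rw [if_neg e1, if_neg e3, if_pos e4] at h1
        norm_num at h1
      · by_cases e5 : q.2 = p.2
        · rw [if_neg e1, if_neg e3, if_neg e4, if_pos e5] at h1
          norm_num at h1
        · rw [if_neg e1, if_neg e3, if_neg e4, if_neg e5] at h1
          norm_num at h1

lemma evA_pairProd (u : Fin n → Sˣ) :
    evA u (∏ p ∈ Finset.univ.filter (fun p : Fin n × Fin n => p.1 < p.2), (Xv p.1 + Xv p.2))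
      = ∏ p ∈ Finset.univ.filter (fun p : Fin n × Fin n => p.1 < p.2), ((u p.1 : S) + u p.2) := by
  rw [map_prod]
  exact Finset.prod_congr rfl fun p _ => by rw [map_add, evA_X, evA_X]

/-- For n ≥ 2, the kernel of the evaluation map
ev(f) = f|_{x_{n-1}=t, x_n=-t} on J_n consists exactly of the elements of the
form ∏_{1≤i<j≤n}(x_i + x_j) · g with g an Sₙ-invariant Laurent polynomial:
for f ∈ J_n, ev(f) = 0 iff f = ∏_{i<j}(x_i + x_j) · g for some symmetric g.
Conversely every such product lies in J_n with ev = 0. -/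
theorem kernel_of_ev (n : ℕ) (hn : 2 ≤ n) (f : LP n) :
    (IsSymmLP f ∧
      (∀ (t t' : ℚˣ) (y : Fin n → ℚˣ),
        lpEval (substPair ⟨0, by omega⟩ ⟨1, by omega⟩ t y) f =
        lpEval (substPair ⟨0, by omega⟩ ⟨1, by omega⟩ t' y) f) ∧
      (∀ (t : ℚˣ) (y : Fin n → ℚˣ),
        lpEval (substPair ⟨n - 2, by omega⟩ ⟨n - 1, by omega⟩ t y) f = 0)) ↔
    (∃ g : LP n, IsSymmLP g ∧
      f = (∏ p ∈ Finset.univ.filter (fun p : Fin n × Fin n => p.1 < p.2),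
        (Xv p.1 + Xv p.2)) * g) := by
  classical
  constructor
  · rintro ⟨hsym, -, h3⟩
    have hij0 : (⟨n - 2, by omega⟩ : Fin n) ≠ ⟨n - 1, by omega⟩ := by
      simp only [ne_eq, Fin.mk.injEq]
      omega
    have hvan : ∀ i j : Fin n, i ≠ j → ∀ (t : ℚˣ) (y : Fin n → ℚˣ),
        lpEval (substPair i j t y) f = 0 := by
      intro i j hij t y
      have h2n : 0 < n := by omega
      set i0 : Fin n := ⟨n - 2, by omega⟩ with hi0def
      set j0 : Fin n := ⟨n - 1, by omega⟩ with hj0def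
      set τ : Equiv.Perm (Fin n) := Equiv.swap i0 i with hτ
      set σ : Equiv.Perm (Fin n) := τ.trans (Equiv.swap (τ j0) j) with hσ
      have hτi : τ i0 = i := Equiv.swap_apply_left i0 i
      have hj'i : τ j0 ≠ i := by
        intro h
        exact hij0 (τ.injective (h.trans hτi.symm)).symm
      have hσi : σ i0 = i := by
        rw [hσ]
        simp only [Equiv.trans_apply, hτi]
        exact Equiv.swap_apply_of_ne_of_ne (Ne.symm hj'i) hij
      have hσj : σ j0 = j := by
        rw [hσ]
        simp only [Equiv.trans_apply]
        exact Equiv.swap_apply_left _ _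
      set z := substPair i j t y with hz
      have hzi : z i = t := by simp [hz, substPair]
      have hzj : z j = -t := by simp [hz, substPair, Ne.symm hij]
      have hkey : substPair i0 j0 t (z ∘ σ) = z ∘ σ := by
        funext k
        simp only [substPair, Function.comp_apply]
        by_cases h1 : k = i0
        · rw [if_pos h1, h1, hσi, hzi]
        · rw [if_neg h1]
          by_cases h2 : k = j0
          · rw [if_pos h2, h2, hσj, hzj]
          · rw [if_neg h2]
      calc lpEval z f = lpEval (z ∘ σ) f := (hsym σ z).symm
        _ = 0 := by rw [← hkey]; exact h3 t (z ∘ σ)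
    have hdvd : ∀ p ∈ Finset.univ.filter (fun p : Fin n × Fin n => p.1 < p.2),
        (Xv p.1 + Xv p.2) ∣ f := by
      intro p hp
      have hlt : p.1 < p.2 := (Finset.mem_filter.mp hp).2
      refine subs_ker (ne_of_lt hlt) ?_
      apply lpEval_eq_zero
      intro x
      rw [lpEval_eq, evA_subsA _ _ (ne_of_lt hlt)]
      exact hvan p.1 p.2 (ne_of_lt hlt) (x p.1) x
    obtain ⟨g, hfg⟩ : (∏ p ∈ Finset.univ.filter (fun p : Fin n × Fin n => p.1 < p.2),
        (Xv p.1 + Xv p.2)) ∣ f :=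
      prod_primes_dvd' _ _
        (fun p hp => prime_pair (ne_of_lt (Finset.mem_filter.mp hp).2))
        (fun p hp q hq hpq =>
          pair_not_dvd (Finset.mem_filter.mp hp).2 (Finset.mem_filter.mp hq).2 hpq)
        hdvd
    refine ⟨g, ?_, hfg⟩
    rw [isSymm_iff]
    intro σ
    have hPf : permA σ f = f := isSymm_iff.mp hsym σ
    have hprod : permA σ (∏ p ∈ Finset.univ.filter (fun p : Fin n × Fin n => p.1 < p.2),
        (Xv p.1 + Xv p.2)) = ∏ p ∈ Finset.univ.filter (fun p : Fin n × Fin n => p.1 < p.2),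
        (Xv p.1 + Xv p.2) := by
      rw [map_prod]
      calc ∏ p ∈ Finset.univ.filter (fun p : Fin n × Fin n => p.1 < p.2),
            permA σ (Xv p.1 + Xv p.2)
          = ∏ p ∈ Finset.univ.filter (fun p : Fin n × Fin n => p.1 < p.2),
            (Xv (σ p.1) + Xv (σ p.2)) :=
            Finset.prod_congr rfl fun p _ => by rw [map_add, permA_X, permA_X]
        _ = _ := prod_pairs_reindex σ (fun a b => Xv a + Xv b) (fun a b => add_comm _ _)
    have hne0 : (∏ p ∈ Finset.univ.filter (fun p : Fin n × Fin n => p.1 < p.2),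
        (Xv p.1 + Xv p.2)) ≠ 0 := by
      rw [Finset.prod_ne_zero_iff]
      exact fun p hp => (prime_pair (ne_of_lt (Finset.mem_filter.mp hp).2)).ne_zero
    apply mul_left_cancel₀ hne0
    calc (∏ p ∈ Finset.univ.filter (fun p : Fin n × Fin n => p.1 < p.2),
          (Xv p.1 + Xv p.2)) * permA σ g
        = permA σ ((∏ p ∈ Finset.univ.filter (fun p : Fin n × Fin n => p.1 < p.2),
          (Xv p.1 + Xv p.2)) * g) := by rw [map_mul, hprod]
      _ = permA σ f := by rw [← hfg]
      _ = f := hPf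
      _ = _ := hfg
  · rintro ⟨g, hg, rfl⟩
    have hzero : ∀ (i j : Fin n), i < j → ∀ (t : ℚˣ) (y : Fin n → ℚˣ),
        lpEval (substPair i j t y)
          ((∏ p ∈ Finset.univ.filter (fun p : Fin n × Fin n => p.1 < p.2),
            (Xv p.1 + Xv p.2)) * g) = 0 := by
      intro i j hij t y
      rw [lpEval_eq, map_mul, evA_pairProd]
      have hmem : (i, j) ∈ Finset.univ.filter (fun p : Fin n × Fin n => p.1 < p.2) :=
        Finset.mem_filter.mpr ⟨Finset.mem_univ _, hij⟩
      have hzer : ((substPair i j t y (i, j).1 : ℚˣ) : ℚ)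
          + ((substPair i j t y (i, j).2 : ℚˣ) : ℚ) = 0 := by
        simp [substPair, Ne.symm (ne_of_lt hij)]
      rw [Finset.prod_eq_zero hmem hzer, zero_mul]
    have h01 : (⟨0, by omega⟩ : Fin n) < (⟨1, by omega⟩ : Fin n) := by
      simp only [Fin.mk_lt_mk]
      omega
    have hnn : (⟨n - 2, by omega⟩ : Fin n) < (⟨n - 1, by omega⟩ : Fin n) := by
      simp only [Fin.mk_lt_mk]
      omega
    refine ⟨?_, ?_, ?_⟩
    · intro σ x
      rw [lpEval_eq, lpEval_eq, map_mul, map_mul, evA_pairProd, evA_pairProd]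
      have h1 : evA (x ∘ σ) g = evA x g := by
        rw [← lpEval_eq, ← lpEval_eq]; exact hg σ x
      rw [h1]
      congr 1
      exact prod_pairs_reindex σ (fun a b => ((x a : ℚ) + x b)) (fun a b => add_comm _ _)
    · intro t t' y
      exact (hzero _ _ h01 t y).trans (hzero _ _ h01 t' y).symm
    · intro t y
      exact hzero _ _ hnn t y
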